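/- The set F_q^∞ = F_q ∪ {∞} equipped with the binary operation ψ is a cyclic group of order q + 1, in which ∞ is the identity element and the inverse of i ∈ F_q is −i (and the inverse of ∞ is ∞). -/
import Mathlib


/-- The Heisenberg group `H₃(F)` of upper unitriangular 3×3 matrices over `F`,
recorded by the three free entries: `x` in position (1,2), `y` in position (2,3),
`z` in position (1,3). -/
@[ext]
structure Heis (F : Type*) where
  x : F
  y : F
  z : F
deriving DecidableEq

namespace Heis

variable {F : Type*} [Field F]

/-- Multiplication corresponding to the matrix product. -/
instance : Group (Heis F) where
  mul a b := ⟨a.x + b.x, a.y + b.y, a.z + b.z + a.x * b.y⟩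
  one := ⟨0, 0, 0⟩
  inv a := ⟨-a.x, -a.y, -a.z + a.x * a.y⟩
  mul_assoc a b c := Heis.ext
    (show a.x + b.x + c.x = a.x + (b.x + c.x) by ring)
    (show a.y + b.y + c.y = a.y + (b.y + c.y) by ring)
    (show a.z + b.z + a.x * b.y + c.z + (a.x + b.x) * c.y
        = a.z + (b.z + c.z + b.x * c.y) + a.x * (b.y + c.y) by ring)
  one_mul a := Heis.ext
    (show (0 : F) + a.x = a.x by ring)
    (show (0 : F) + a.y = a.y by ring)
    (show (0 : F) + a.z + 0 * a.y = a.z by ring)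
  mul_one a := Heis.ext
    (show a.x + 0 = a.x by ring)
    (show a.y + 0 = a.y by ring)
    (show a.z + 0 + a.x * 0 = a.z by ring)
  inv_mul_cancel a := Heis.ext
    (show -a.x + a.x = 0 by ring)
    (show -a.y + a.y = 0 by ring)
    (show -a.z + a.x * a.y + a.z + -a.x * a.y = 0 by ring)

instance [Fintype F] : Fintype (Heis F) :=
  Fintype.ofEquiv (F × F × F)
    ⟨fun p => ⟨p.1, p.2.1, p.2.2⟩, fun a => (a.x, a.y, a.z), fun _ => rfl, fun _ => rfl⟩

end Heis

/-- The element `g(x,y,z)` of the Heisenberg group. -/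
def gElt {F : Type*} (x y z : F) : Heis F := ⟨x, y, z⟩

/-- The center `Z = {g(0,0,z) : z ∈ F}` of the Heisenberg group, as a set. -/
def Zset (F : Type*) [Field F] : Set (Heis F) := {g : Heis F | g.x = 0 ∧ g.y = 0}

/-- The center `Z` as a subgroup of the Heisenberg group. -/
def Zsub (F : Type*) [Field F] : Subgroup (Heis F) where
  carrier := Zset F
  mul_mem' := fun {a b} ha hb =>
    ⟨show a.x + b.x = 0 by rw [ha.1, hb.1, add_zero],
     show a.y + b.y = 0 by rw [ha.2, hb.2, add_zero]⟩
  one_mem' := ⟨rfl, rfl⟩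
  inv_mem' := fun {a} ha =>
    ⟨show -a.x = 0 by rw [ha.1, neg_zero],
     show -a.y = 0 by rw [ha.2, neg_zero]⟩

/-- `γ_i(α,β) = αβ/2 + (α² − εβ²)i`. -/
def gam {F : Type*} [Field F] (ε i α β : F) : F := α * β / 2 + (α ^ 2 - ε * β ^ 2) * i

/-- `Y_i = {g(α, β, γ_i(α,β)) : (α,β) ≠ (0,0)}`. -/
def Yset {F : Type*} [Field F] (ε i : F) : Set (Heis F) :=
  {g : Heis F | ∃ α β : F, (α, β) ≠ (0, 0) ∧ g = gElt α β (gam ε i α β)}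

/-- `X_i = Y_i ∪ {e}`. -/
def Xset {F : Type*} [Field F] (ε i : F) : Set (Heis F) := Yset ε i ∪ {1}

/-- The map `ρ(M) : G → G` attached to the matrix `M = [[α,β],[εβ,α]]`. -/
def rho {F : Type*} [Field F] (ε α β : F) : Heis F → Heis F := fun g =>
  gElt (α * g.x + ε * β * g.y) (β * g.x + α * g.y)
    (α * β * (g.x ^ 2 / 2 + ε * g.y ^ 2 / 2) + ε * β ^ 2 * g.x * g.y
      + (α ^ 2 - ε * β ^ 2) * g.z)

/-- `K = {ρ(M) : M = [[α,β],[εβ,α]], (α,β) ≠ (0,0)}`, as a set of maps `G → G`. -/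
def Kset {F : Type*} [Field F] (ε : F) : Set (Heis F → Heis F) :=
  {f | ∃ α β : F, (α, β) ≠ (0, 0) ∧ f = rho ε α β}

/-- The family of sets `{e}`, `Z \ {e}`, `Y_i` for `i ∈ F`. -/
def SFam {F : Type*} [Field F] (ε : F) : Set (Set (Heis F)) :=
  insert {1} (insert (Zset F \ {1}) {S | ∃ i : F, S = Yset ε i})

/-- `f` preserves each of the basic sets `{e}`, `Z \ {e}`, `Y_i`:
`hg⁻¹ ∈ S ↔ f(h)f(g)⁻¹ ∈ S`. -/
def Preserves {F : Type*} [Field F] (ε : F) (f : Heis F → Heis F) : Prop :=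
  ∀ S ∈ SFam ε, ∀ g h : Heis F, h * g⁻¹ ∈ S ↔ f h * (f g)⁻¹ ∈ S

/-- The set of permutations of `G` of the form `x ↦ σ(x)·c` with `σ ∈ K`, `c ∈ G`. -/
def Aset {F : Type*} [Field F] (ε : F) : Set (Equiv.Perm (Heis F)) :=
  {f | ∃ σ ∈ Kset ε, ∃ c : Heis F, ∀ x : Heis F, f x = σ x * c}

/-- The operation `ψ` on `F ∪ {∞}`, with `∞` encoded as `none`. -/
def psi {F : Type*} [Field F] [DecidableEq F] (ε : F) : Option F → Option F → Option F
  | none, j => j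
  | some i, none => some i
  | some i, some j => if i + j = 0 then none else some ((i * j + ε / 16) / (i + j))

/-- `Y_k` for `k ∈ F ∪ {∞}`, where `Y_∞ = Z \ {e}`. -/
def YInf {F : Type*} [Field F] (ε : F) : Option F → Set (Heis F)
  | some i => Yset ε i
  | none => Zset F \ {1}

open Polynomial in
private theorem psi_main {F : Type*} [Field F] [Fintype F] [DecidableEq F]
    (h2 : (2:F) ≠ 0) (ε : F) (hδ : ¬ IsSquare (ε/16)) :
    (∀ i j k : Option F, psi ε (psi ε i j) k = psi ε i (psi ε j k)) ∧
    (∃ g : Option F, ∀ x : Option F, ∃ n : ℕ, (psi ε g)^[n] none = x) := by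
  set δ : F := ε / 16 with hδdef
  have hirr : Irreducible (X ^ 2 - C δ) :=
    X_pow_sub_C_irreducible_of_prime Nat.prime_two (fun b hb => hδ ⟨b, by rw [← hb]; ring⟩)
  haveI := Fact.mk hirr
  set K := AdjoinRoot (X ^ 2 - C δ) with hK
  set c : F →+* K := algebraMap F K with hc
  set r : K := AdjoinRoot.root (X ^ 2 - C δ) with hr
  have hr2 : r ^ 2 = c δ := by
    have h0 := AdjoinRoot.mk_self (f := X ^ 2 - C δ)
    have h1 : r ^ 2 - c δ = 0 := by
      rw [hc, AdjoinRoot.algebraMap_eq]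
      simpa [map_sub, map_pow] using h0
    exact sub_eq_zero.mp h1
  have cinj : Function.Injective c := c.injective
  have h2K : (2 : K) ≠ 0 := by
    have : c 2 = 2 := map_ofNat c 2
    rw [← this, ← map_zero c]
    exact fun h => h2 (cinj h)
  have hr0 : r ≠ 0 := by
    intro h
    apply hδ
    have : c δ = 0 := by rw [← hr2, h]; ring
    have : δ = 0 := by rw [← map_zero c] at this; exact cinj this
    exact ⟨0, by rw [this]; ring⟩
  have hsub : ∀ i : F, c i - r ≠ 0 := by
    intro i h
    apply hδ
    have hcr : c i = r := sub_eq_zero.mp h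
    refine ⟨i, cinj ?_⟩
    rw [map_mul, ← sq, hcr, hr2]
  have hadd : ∀ i : F, c i + r ≠ 0 := by
    intro i h
    apply hδ
    have hcr : c i = -r := by linear_combination h
    refine ⟨i, cinj ?_⟩
    rw [map_mul, ← sq, hcr, ← hr2]; ring
  set θ : Option F → K := fun o => o.elim 1 (fun i => (c i + r) / (c i - r)) with hθ
  have θmul : ∀ a b : Option F, θ (psi ε a b) = θ a * θ b := by
    rintro (_ | i) (_ | j)
    · simp [psi, hθ]
    · simp [psi, hθ]
    · simp [psi, hθ]
    · show θ (if i + j = 0 then none else some ((i * j + δ) / (i + j))) = _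
      split_ifs with h
      · have hj : j = -i := by linear_combination h
        subst hj
        show (1 : K) = (c i + r) / (c i - r) * ((c (-i) + r) / (c (-i) - r))
        rw [div_mul_div_comm, eq_comm, div_eq_one_iff_eq (mul_ne_zero (hsub i) (hsub (-i)))]
        rw [map_neg]; ring
      · have hij : c i + c j ≠ 0 := by
          rw [← map_add]; intro hz
          exact h (by simpa using cinj (by rw [hz, map_zero]))
        have hk : c ((i * j + δ) / (i + j)) * (c i + c j) = c i * c j + c δ := by
          rw [← map_add, ← map_mul, ← map_mul, ← map_add]
          congr 1
          field_simp
        show (c ((i * j + δ) / (i + j)) + r) / (c ((i * j + δ) / (i + j)) - r)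
            = (c i + r) / (c i - r) * ((c j + r) / (c j - r))
        rw [div_mul_div_comm, div_eq_div_iff (hsub _) (mul_ne_zero (hsub i) (hsub j))]
        linear_combination (2 * r) * hr2 - (2 * r) * hk
  have θinj : Function.Injective θ := by
    rintro (_ | i) (_ | j) h
    · rfl
    · exfalso
      have h1 : (1 : K) = (c j + r) / (c j - r) := h
      rw [eq_comm, div_eq_one_iff_eq (hsub j)] at h1
      have : (2 : K) * r = 0 := by linear_combination h1
      exact (mul_ne_zero h2K hr0) this
    · exfalso
      have h1 : (c i + r) / (c i - r) = 1 := h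
      rw [div_eq_one_iff_eq (hsub i)] at h1
      have : (2 : K) * r = 0 := by linear_combination h1
      exact (mul_ne_zero h2K hr0) this
    · have h1 : (c i + r) / (c i - r) = (c j + r) / (c j - r) := h
      rw [div_eq_div_iff (hsub i) (hsub j)] at h1
      have h3 : (2 : K) * r * (c j - c i) = 0 := by linear_combination h1
      have h4 : c j - c i = 0 := by
        rcases mul_eq_zero.mp h3 with h5 | h5
        · exact absurd h5 (mul_ne_zero h2K hr0)
        · exact h5
      have : i = j := cinj (sub_eq_zero.mp h4).symm
      rw [this]
  have massoc : ∀ i j k : Option F, psi ε (psi ε i j) k = psi ε i (psi ε j k) := by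
    intro i j k
    apply θinj
    rw [θmul, θmul, θmul, θmul, mul_assoc]
  refine ⟨massoc, ?_⟩
  letI : Group (Option F) :=
    { mul := psi ε
      one := none
      inv := Option.map (fun x => -x)
      mul_assoc := massoc
      one_mul := fun a => rfl
      mul_one := fun a => by cases a <;> rfl
      inv_mul_cancel := fun a => by
        cases a with
        | none => rfl
        | some i =>
          show psi ε (some (-i)) (some i) = none
          simp [psi] }
  have hmul : ∀ a b : Option F, a * b = psi ε a b := fun _ _ => rfl
  letI θhom : (Option F) →* K :=
    { toFun := θ, map_one' := rfl, map_mul' := fun a b => θmul a b }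
  haveI : IsCyclic (Option F) := isCyclic_of_subgroup_isDomain θhom θinj
  obtain ⟨g, hg⟩ := IsCyclic.exists_monoid_generator (α := Option F)
  refine ⟨g, fun x => ?_⟩
  obtain ⟨n, hn⟩ := hg x
  refine ⟨n, ?_⟩
  rw [← hn]
  clear hn
  induction n with
  | zero => rfl
  | succ m ih =>
    rw [Function.iterate_succ_apply', ih]
    show g * g ^ m = g ^ (m + 1)
    rw [pow_succ']

/-- The set `F_q^∞ = F_q ∪ {∞}` equipped with the binary operation `ψ`
is a cyclic group of order `q + 1`, in which `∞` (encoded as `none`) is the identity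
element and the inverse of `i ∈ F_q` is `−i` (and the inverse of `∞` is `∞`). -/
theorem statement_4 {F : Type*} [Field F] [Fintype F] [DecidableEq F]
    (hodd : Odd (Fintype.card F)) (ε : F) (hε : ¬IsSquare ε) :
    (∀ i j k : Option F, psi ε (psi ε i j) k = psi ε i (psi ε j k)) ∧
    (∀ j : Option F, psi ε none j = j) ∧
    (∀ i : Option F, psi ε i none = i) ∧
    (∀ i : F, psi ε (some i) (some (-i)) = none) ∧
    (∀ i : F, psi ε (some (-i)) (some i) = none) ∧
    Nat.card (Option F) = Fintype.card F + 1 ∧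
    (∃ g : Option F, ∀ x : Option F, ∃ n : ℕ, (psi ε g)^[n] none = x) := by
  have h2 : (2 : F) ≠ 0 := by
    intro h
    have hdvd : ringChar F ∣ 2 := (ringChar.spec F 2).mp (by exact_mod_cast h)
    rcases (Nat.dvd_prime Nat.prime_two).mp hdvd with h1 | h1
    · exact CharP.ringChar_ne_one h1
    · have := FiniteField.even_card_of_char_two h1
      rw [Nat.odd_iff] at hodd
      omega
  have h16 : (16 : F) ≠ 0 := by
    intro h
    apply h2
    have : (2 : F) ^ 4 = 0 := by rw [show (2:F)^4 = 16 by norm_num, h]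
    exact pow_eq_zero_iff (by norm_num) |>.mp this
  have hδ : ¬ IsSquare (ε / 16) := by
    rintro ⟨s, hs⟩
    apply hε
    refine ⟨4 * s, ?_⟩
    field_simp at hs
    rw [hs]; ring
  obtain ⟨massoc, hgen⟩ := psi_main h2 ε hδ
  refine ⟨massoc, fun j => rfl, fun i => by cases i <;> rfl, ?_, ?_, ?_, hgen⟩
  · intro i; simp [psi]
  · intro i; simp [psi]
  · rw [Nat.card_eq_fintype_card, Fintype.card_option]
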